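/- Let X_1, X_2, ... be i.i.d. integrable real random variables with CDF F, not almost surely constant, and μ_k := E[max(X_1,...,X_k)]. Then μ_{k+1} - μ_k = ∫_{-∞}^{∞} F(x)^k (1 - F(x)) dx, and this quantity is strictly positive; hence (μ_k) is strictly increasing. -/

import Mathlib

/-!
With `M = max(X₁, …, X_k)` and `Y = X_{k+1}`, the increment `μ_{k+1} - μ_k` is
`E[(Y - M)⁺] = E[λ(Ico M Y)] = ∫ P(M ≤ x < Y) dx` by Tonelli, and independence gives
`P(M ≤ x < Y) = F(x)^k (1 - F(x))`. For positivity, a probability measure on `ℝ` whose CDF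
only takes the values `0` and `1` is a Dirac mass, so some `x` has `0 < F(x) < 1` and then the
event `M ≤ x < Y`, on which `max(M, Y) - M > 0`, has positive probability.
-/

open MeasureTheory Set ProbabilityTheory

section

variable {Ω : Type*} [MeasurableSpace Ω] {P : Measure Ω}

namespace MeasureTheory

theorem Measure.exists_eq_dirac_of_measure_Iic_eq_zero_or_one {α : Type*} [TopologicalSpace α]
    [MeasurableSpace α] [SecondCountableTopology α] [LinearOrder α] [OrderTopology α]
    [BorelSpace α] [StandardBorelSpace α] {ν : Measure α} [IsProbabilityMeasure ν]
    (h : ∀ x, ν (Iic x) = 0 ∨ ν (Iic x) = 1) : ∃ a, ν = dirac a := by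
  -- Both sides agree on every `Iic x`; evaluating at `s` then gives `ν s = ν s * ν s`.
  have hrestrict : ∀ s, ν.restrict s = ν s • ν := fun s ↦ by
    refine ext_of_Iic _ _ fun x ↦ ?_
    rw [restrict_apply measurableSet_Iic, smul_apply, smul_eq_mul]
    rcases h x with h0 | h1
    · rw [h0, mul_zero]
      exact measure_mono_null inter_subset_left h0
    · rw [h1, mul_one, inter_comm]
      exact measure_inter_conull ((prob_compl_eq_zero_iff measurableSet_Iic).2 h1)
  have : IsZeroOneMeasure ν := ⟨fun s hs ↦ by
    have hss : ν s = ν s * ν s := by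
      simpa [restrict_apply hs] using congr($(hrestrict s) s)
    by_cases h0 : ν s = 0
    · exact .inl h0
    · refine .inr ((ENNReal.mul_right_inj h0 (measure_ne_top ν s)).1 ?_)
      rw [mul_one, ← hss]⟩
  exact IsZeroOneMeasure.exists_eq_dirac

lemma ae_eq_of_map_eq_dirac {α : Type*} [MeasurableSpace α] [MeasurableSingletonClass α]
    {X : Ω → α} {a : α} (hX : Measurable X) (h : P.map X = Measure.dirac a) :
    ∀ᵐ ω ∂P, X ω = a :=
  (ae_map_iff hX.aemeasurable (measurableSet_singleton a)).1 <| by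
    rw [h, ae_dirac_eq]
    exact Filter.eventually_pure.2 rfl

lemma Integrable.partialSups {β : Type*} [NormedAddCommGroup β] [Lattice β] [HasSolidNorm β]
    [IsOrderedAddMonoid β] {f : ℕ → Ω → β} (hf : ∀ i, Integrable (f i) P) (n : ℕ) :
    Integrable (fun ω ↦ partialSups (f · ω) n) P := by
  induction n with
  | zero => simpa using hf 0
  | succ n ih =>
    simp only [partialSups_add_one]
    exact ih.sup (hf (n + 1))

lemma measurableSet_le_snd_lt {f g : Ω → ℝ} (hf : Measurable f) (hg : Measurable g) :
    MeasurableSet {p : Ω × ℝ | f p.1 ≤ p.2 ∧ p.2 < g p.1} :=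
  (measurableSet_le (hf.comp measurable_fst) measurable_snd).inter
    (measurableSet_lt measurable_snd (hg.comp measurable_fst))

lemma lintegral_ofReal_sub_eq_lintegral_measure_le_lt [SFinite P] {f g : Ω → ℝ}
    (hf : Measurable f) (hg : Measurable g) :
    ∫⁻ ω, ENNReal.ofReal (g ω - f ω) ∂P = ∫⁻ x, P {ω | f ω ≤ x ∧ x < g ω} := by
  set A : Set (Ω × ℝ) := {p | f p.1 ≤ p.2 ∧ p.2 < g p.1}
  have hA : MeasurableSet A := measurableSet_le_snd_lt hf hg
  calc ∫⁻ ω, ENNReal.ofReal (g ω - f ω) ∂P = ∫⁻ ω, volume (Prod.mk ω ⁻¹' A) ∂P := by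
        congr! 2 with ω
        exact (Real.volume_Ico (a := f ω) (b := g ω)).symm
    _ = P.prod volume A := (Measure.prod_apply hA).symm
    _ = ∫⁻ x, P {ω | f ω ≤ x ∧ x < g ω} := Measure.prod_apply_symm hA

lemma measurable_measure_le_lt [SFinite P] {f g : Ω → ℝ} (hf : Measurable f)
    (hg : Measurable g) : Measurable fun x ↦ P {ω | f ω ≤ x ∧ x < g ω} :=
  measurable_measure_prodMk_right (measurableSet_le_snd_lt hf hg)

lemma integral_max_sub_integral_eq_integral_measureReal [IsFiniteMeasure P] {f g : Ω → ℝ}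
    (hf : Measurable f) (hg : Measurable g) (hfi : Integrable f P) (hgi : Integrable g P) :
    ∫ ω, max (f ω) (g ω) ∂P - ∫ ω, f ω ∂P = ∫ x, P.real {ω | f ω ≤ x ∧ x < g ω} := by
  have hmax : Integrable (fun ω ↦ max (f ω) (g ω)) P := hfi.sup hgi
  have hsub : ∀ ω, max (f ω) (g ω) - f ω = max (g ω - f ω) 0 := fun ω ↦ by
    rw [← max_sub_sub_right, sub_self, max_comm]
  rw [← integral_sub hmax hfi]
  simp_rw [hsub]
  rw [integral_eq_lintegral_of_nonneg_ae (f := fun ω ↦ max (g ω - f ω) 0)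
    (.of_forall fun ω ↦ le_max_right _ _) (by fun_prop)]
  simp only [ENNReal.ofReal_max, ENNReal.ofReal_zero, max_zero]
  rw [lintegral_ofReal_sub_eq_lintegral_measure_le_lt hf hg, ← integral_toReal
    (measurable_measure_le_lt hf hg).aemeasurable (.of_forall fun x ↦ measure_lt_top P _)]
  rfl

lemma integral_max_sub_integral_pos [IsFiniteMeasure P] {f g : Ω → ℝ} (hfi : Integrable f P)
    (hgi : Integrable g P) {x : ℝ} (hx : P {ω | f ω ≤ x ∧ x < g ω} ≠ 0) :
    0 < ∫ ω, max (f ω) (g ω) ∂P - ∫ ω, f ω ∂P := by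
  have hmax : Integrable (fun ω ↦ max (f ω) (g ω)) P := hfi.sup hgi
  rw [← integral_sub hmax hfi, integral_pos_iff_support_of_nonneg
    (fun ω ↦ sub_nonneg.2 (le_max_left _ _)) (hmax.sub hfi)]
  refine (pos_iff_ne_zero.2 hx).trans_le (measure_mono fun ω ⟨hfx, hxg⟩ ↦ ?_)
  exact sub_ne_zero.2 (ne_of_gt (lt_max_of_lt_right (hfx.trans_lt hxg)))

end MeasureTheory

lemma Measurable.partialSups {α : Type*} [MeasurableSpace α] [SemilatticeSup α]
    [MeasurableSup₂ α] {f : ℕ → Ω → α} (hf : ∀ i, Measurable (f i)) (n : ℕ) :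
    Measurable fun ω ↦ partialSups (f · ω) n := by
  induction n with
  | zero => simpa using hf 0
  | succ n ih =>
    simp only [partialSups_add_one]
    exact ih.sup (hf (n + 1))

namespace ProbabilityTheory.iIndepFun

lemma measure_biInter_preimage_inter_preimage {ι β : Type*} [MeasurableSpace β]
    {X : ι → Ω → β} (hindep : iIndepFun X P) (hmeas : ∀ i, Measurable (X i)) {ν : Measure β}
    (hident : ∀ i, P.map (X i) = ν) {s : Finset ι} {j : ι} (hj : j ∉ s) {A B : Set β}
    (hA : MeasurableSet A) (hB : MeasurableSet B) :
    P ((⋂ i ∈ s, X i ⁻¹' A) ∩ X j ⁻¹' B) = ν A ^ s.card * ν B := by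
  classical
  have hlaw : ∀ i {C}, MeasurableSet C → P (X i ⁻¹' C) = ν C := fun i C hC ↦ by
    rw [← hident i, Measure.map_apply (hmeas i) hC]
  have hprod := hindep.measure_inter_preimage_eq_mul (insert j s)
    (sets := Function.update (fun _ ↦ A) j B) fun i _ ↦ by
      rcases eq_or_ne i j with rfl | hi
      · simpa using hB
      · simpa [hi] using hA
  have hne : ∀ i ∈ s, i ≠ j := fun i hi h ↦ hj (h ▸ hi)
  have hinter : ⋂ i ∈ s, X i ⁻¹' Function.update (fun _ ↦ A) j B i = ⋂ i ∈ s, X i ⁻¹' A :=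
    iInter₂_congr fun i hi ↦ by rw [Function.update_of_ne (hne i hi)]
  rw [Finset.set_biInter_insert, Finset.prod_insert hj, Function.update_self, hinter, inter_comm,
    Finset.prod_congr rfl fun i hi ↦ by rw [Function.update_of_ne (hne i hi), hlaw i hA]] at hprod
  rw [hprod, Finset.prod_const, hlaw j hB, mul_comm]

lemma measure_partialSups_le_lt {β : Type*} [LinearOrder β] [TopologicalSpace β]
    [OrderClosedTopology β] [MeasurableSpace β] [OpensMeasurableSpace β] {Y : ℕ → Ω → β}
    (hindep : iIndepFun Y P) (hmeas : ∀ i, Measurable (Y i)) {ν : Measure β}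
    (hident : ∀ i, P.map (Y i) = ν) (k : ℕ) (x : β) :
    P {ω | partialSups (Y · ω) k ≤ x ∧ x < Y (k + 1) ω} = ν (Iic x) ^ (k + 1) * ν (Ioi x) := by
  have hevent : {ω | partialSups (Y · ω) k ≤ x ∧ x < Y (k + 1) ω}
      = (⋂ i ∈ Finset.range (k + 1), Y i ⁻¹' Iic x) ∩ Y (k + 1) ⁻¹' Ioi x := by
    ext ω
    simp
  rw [hevent, hindep.measure_biInter_preimage_inter_preimage hmeas hident (by simp)
    measurableSet_Iic measurableSet_Ioi, Finset.card_range]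

variable [IsProbabilityMeasure P] {Y : ℕ → Ω → ℝ} (hindep : iIndepFun Y P)
  (hmeas : ∀ i, Measurable (Y i)) (hint : ∀ i, Integrable (Y i) P) {ν : Measure ℝ}
  (hident : ∀ i, P.map (Y i) = ν)
include hindep hmeas hint hident

lemma integral_partialSups_add_one_sub (k : ℕ) :
    ∫ ω, partialSups (Y · ω) (k + 1) ∂P - ∫ ω, partialSups (Y · ω) k ∂P
      = ∫ x, ν.real (Iic x) ^ (k + 1) * (1 - ν.real (Iic x)) := by
  have : IsProbabilityMeasure ν :=
    hident 0 ▸ Measure.isProbabilityMeasure_map (hmeas 0).aemeasurable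
  simp only [partialSups_add_one]
  rw [integral_max_sub_integral_eq_integral_measureReal (.partialSups hmeas k) (hmeas _)
    (.partialSups hint k) (hint _)]
  congr 1 with x
  rw [measureReal_def, hindep.measure_partialSups_le_lt hmeas hident, ENNReal.toReal_mul,
    ENNReal.toReal_pow, ← compl_Iic, ← probReal_compl_eq_one_sub measurableSet_Iic]
  rfl

lemma integral_partialSups_add_one_sub_pos (hν : ∀ a, ν ≠ Measure.dirac a) (k : ℕ) :
    0 < ∫ ω, partialSups (Y · ω) (k + 1) ∂P - ∫ ω, partialSups (Y · ω) k ∂P := by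
  have : IsProbabilityMeasure ν :=
    hident 0 ▸ Measure.isProbabilityMeasure_map (hmeas 0).aemeasurable
  obtain ⟨x, hx0, hx1⟩ : ∃ x, ν (Iic x) ≠ 0 ∧ ν (Iic x) ≠ 1 := by
    by_contra! h
    obtain ⟨a, ha⟩ := Measure.exists_eq_dirac_of_measure_Iic_eq_zero_or_one
      fun x ↦ (em _).imp_right (h x)
    exact hν a ha
  simp only [partialSups_add_one]
  refine integral_max_sub_integral_pos (.partialSups hint k) (hint _) (x := x) ?_
  rw [hindep.measure_partialSups_le_lt hmeas hident, ← compl_Iic]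
  exact mul_ne_zero (pow_ne_zero _ hx0) fun h ↦ hx1 ((prob_compl_eq_zero_iff measurableSet_Iic).1 h)

end ProbabilityTheory.iIndepFun

end

theorem iid_expected_max_strict_increase
    {Ω : Type*} [MeasurableSpace Ω] (P : Measure Ω) [IsProbabilityMeasure P]
    (X : ℕ → Ω → ℝ)
    (hmeas : ∀ i, Measurable (X i))
    (hint : ∀ i, Integrable (X i) P)
    (hindep : ProbabilityTheory.iIndepFun X P)
    (hident : ∀ i, Measure.map (X i) P = Measure.map (X 1) P)
    (hnondeg : ¬ ∃ a : ℝ, ∀ᵐ ω ∂P, X 1 ω = a)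
    (F : ℝ → ℝ)
    (hF : ∀ x, F x = (P (X 1 ⁻¹' Set.Iic x)).toReal)
    (μ : ℕ → ℝ)
    (hμ : ∀ k, μ k = ∫ ω, (partialSups (fun i => X (i + 1) ω)) (k - 1) ∂P) :
    ∀ k : ℕ, 1 ≤ k →
      μ (k + 1) - μ k = (∫ x : ℝ, F x ^ k * (1 - F x)) ∧
      0 < μ (k + 1) - μ k := by
  intro k hk
  obtain ⟨m, rfl⟩ : ∃ m, k = m + 1 := ⟨k - 1, by omega⟩
  have hY := hindep.precomp (add_left_injective 1)
  have hdiff : μ (m + 1 + 1) - μ (m + 1) = ∫ ω, partialSups (fun i ↦ X (i + 1) ω) (m + 1) ∂P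
      - ∫ ω, partialSups (fun i ↦ X (i + 1) ω) m ∂P := by
    simp [hμ]
  have hFν : ∀ x, F x = (P.map (X 1)).real (Iic x) := fun x ↦ by
    rw [hF, measureReal_def, Measure.map_apply (hmeas 1) measurableSet_Iic]
  rw [hdiff]
  refine ⟨?_, hY.integral_partialSups_add_one_sub_pos (fun i ↦ hmeas (i + 1)) (fun i ↦ hint (i + 1))
    (fun i ↦ hident (i + 1)) (fun a ha ↦ hnondeg ⟨a, ae_eq_of_map_eq_dirac (hmeas 1) ha⟩) m⟩
  simp_rw [hFν]
  exact hY.integral_partialSups_add_one_sub (fun i ↦ hmeas (i + 1)) (fun i ↦ hint (i + 1))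
    (fun i ↦ hident (i + 1)) m
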